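/- arXiv:2204.10499 — 2 statements merged into one kernel-verified Lean document; each statement's English description precedes it below -/
import Mathlib

section
/- Lattice operations are statistically p-continuous: in a lattice-normed Riesz space, if xₙ →(st_p) x and yₙ →(st_p) y, then xₙ ∨ yₙ →(st_p) x ∨ y and xₙ ∧ yₙ →(st_p) x ∧ y. -/
open scoped Classical

/-- `K ⊆ ℕ` has natural density `d`. -/
def HasDensity (K : Set ℕ) (d : ℝ) : Prop :=
  Filter.Tendsto
    (fun n => (((Finset.range n).filter (fun k => k ∈ K)).card : ℝ) / n)
    Filter.atTop (nhds d)

/-- Statistical p-convergence of a sequence `x` to `x₀` in a lattice-normed space `(X, p, E)`: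
there is a sequence `q` in `E`, decreasing along an index set `K` of density 1 with infimum `0`,
dominating `p (x n - x₀)` on `K`. -/
def StatPConv {X E : Type*} [AddCommGroup X] [AddCommGroup E] [Lattice E]
    (p : X → E) (x : ℕ → X) (x₀ : X) : Prop :=
  ∃ (q : ℕ → E) (K : Set ℕ), HasDensity K 1 ∧
    (∀ m ∈ K, ∀ n ∈ K, m ≤ n → q n ≤ q m) ∧
    IsGLB (q '' K) 0 ∧
    ∀ n ∈ K, p (x n - x₀) ≤ q n

/-!
Both `xₙ ⊔ yₙ - a ⊔ b` and `xₙ ⊓ yₙ - a ⊓ b` are bounded in absolute value by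
`|xₙ - a| + |yₙ - b|` (Birkhoff's inequality in each argument), so monotonicity and the triangle
inequality of `p` bound their `p`-values by `qₓ n + q_y n`. On the density-one set `Kₓ ∩ K_y`
this sum is decreasing, and its infimum is `0 + 0`: the infima of `qₓ` and `q_y` do not change
when passing to the cofinal subset `Kₓ ∩ K_y`.
-/

open Finset

lemma abs_sup_sub_sup_le_abs_add_abs {α : Type*} [Lattice α] [AddCommGroup α] [AddLeftMono α]
    (a b c d : α) : |a ⊔ b - c ⊔ d| ≤ |a - c| + |b - d| :=
  calc |a ⊔ b - c ⊔ d| = |(a ⊔ b - c ⊔ b) + (c ⊔ b - c ⊔ d)| := by rw [sub_add_sub_cancel]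
    _ ≤ |a ⊔ b - c ⊔ b| + |c ⊔ b - c ⊔ d| := abs_add_le _ _
    _ ≤ |a - c| + |b - d| := add_le_add (abs_sup_sub_sup_le_abs _ _ _)
      (by simpa only [sup_comm c] using abs_sup_sub_sup_le_abs b d c)

lemma abs_inf_sub_inf_le_abs_add_abs {α : Type*} [Lattice α] [AddCommGroup α] [AddLeftMono α]
    (a b c d : α) : |a ⊓ b - c ⊓ d| ≤ |a - c| + |b - d| :=
  calc |a ⊓ b - c ⊓ d| = |(a ⊓ b - c ⊓ b) + (c ⊓ b - c ⊓ d)| := by rw [sub_add_sub_cancel]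
    _ ≤ |a ⊓ b - c ⊓ b| + |c ⊓ b - c ⊓ d| := abs_add_le _ _
    _ ≤ |a - c| + |b - d| := add_le_add (abs_inf_sub_inf_le_abs _ _ _)
      (by simpa only [inf_comm c] using abs_inf_sub_inf_le_abs b d c)

lemma le_add_of_abs_le_abs_add_abs {X E : Type*} [AddCommGroup X] [Lattice X] [AddLeftMono X]
    [AddCommGroup E] [Preorder E] [AddLeftMono E] {p : X → E}
    (hptri : ∀ v w : X, p (v + w) ≤ p v + p w) (hpmono : ∀ v w : X, |v| ≤ |w| → p v ≤ p w)
    {v w₁ w₂ : X} (h : |v| ≤ |w₁| + |w₂|) : p v ≤ p w₁ + p w₂ :=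
  calc p v ≤ p (|w₁| + |w₂|) :=
        hpmono _ _ (by rwa [abs_of_nonneg (add_nonneg (abs_nonneg w₁) (abs_nonneg w₂))])
    _ ≤ p |w₁| + p |w₂| := hptri _ _
    _ ≤ p w₁ + p w₂ := add_le_add (hpmono _ _ (abs_abs w₁).le) (hpmono _ _ (abs_abs w₂).le)

lemma card_filter_add_card_filter_le_card_filter_add {α : Type*} [DecidableEq α] (s : Finset α)
    {K L M : Set α} (h : K ∩ L ⊆ M) :
    (s.filter (· ∈ K)).card + (s.filter (· ∈ L)).card ≤ (s.filter (· ∈ M)).card + s.card := by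
  rw [← card_union_add_card_inter, add_comm]
  refine add_le_add (card_le_card fun a ha => ?_)
    (card_le_card (union_subset (filter_subset _ _) (filter_subset _ _)))
  simp only [mem_inter, mem_filter] at ha ⊢
  exact ⟨ha.1.1, h ⟨ha.1.2, ha.2.2⟩⟩

lemma card_filter_mem_range_div_le_one (M : Set ℕ) (n : ℕ) :
    (((range n).filter (· ∈ M)).card : ℝ) / n ≤ 1 :=
  div_le_one_of_le₀ (by exact_mod_cast (card_filter_le _ _).trans (card_range n).le) n.cast_nonneg

lemma HasDensity.inter_of_one {K L : Set ℕ} (hK : HasDensity K 1) (hL : HasDensity L 1) :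
    HasDensity (K ∩ L) 1 := by
  have hlower := (hK.add hL).sub_const 1
  norm_num at hlower
  refine tendsto_of_tendsto_of_tendsto_of_le_of_le' hlower tendsto_const_nhds ?_
    (Filter.Eventually.of_forall (card_filter_mem_range_div_le_one (K ∩ L)))
  filter_upwards [Filter.eventually_ne_atTop 0] with n hn
  rw [← add_div, sub_le_iff_le_add, ← div_self (Nat.cast_ne_zero.mpr hn), ← add_div]
  refine div_le_div_of_nonneg_right ?_ n.cast_nonneg
  norm_cast
  exact (card_filter_add_card_filter_le_card_filter_add _ subset_rfl).trans_eq
    (by rw [card_range])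

lemma HasDensity.infinite_of_one {K : Set ℕ} (hK : HasDensity K 1) : K.Infinite := by
  intro hfin
  have hzero : HasDensity K 0 :=
    tendsto_of_tendsto_of_tendsto_of_le_of_le tendsto_const_nhds
      (tendsto_const_div_atTop_nhds_zero_nat (hfin.toFinset.card : ℝ))
      (fun n => by positivity)
      (fun n => by
        gcongr
        intro k hk
        simp only [mem_filter] at hk
        exact hfin.mem_toFinset.mpr hk.2)
  exact one_ne_zero (tendsto_nhds_unique hK hzero)

section Antitone

variable {ι β : Type*}

lemma AntitoneOn.isGLB_image_iff_of_cofinal [Preorder ι] [Preorder β] {q : ι → β}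
    {K L : Set ι} {c : β} (hq : AntitoneOn q K) (hLK : L ⊆ K) (hL : ∀ i ∈ K, ∃ j ∈ L, i ≤ j) :
    IsGLB (q '' L) c ↔ IsGLB (q '' K) c := by
  suffices lowerBounds (q '' L) = lowerBounds (q '' K) by rw [IsGLB, IsGLB, this]
  refine (lowerBounds_mono_set (Set.image_mono hLK)).antisymm' ?_
  rintro c hc _ ⟨i, hi, rfl⟩
  obtain ⟨j, hj, hij⟩ := hL i hi
  exact (hc ⟨j, hj, rfl⟩).trans (hq hi (hLK hj) hij)

lemma AntitoneOn.isGLB_image_add [LinearOrder ι] [AddCommGroup β] [Preorder β] [AddLeftMono β]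
    {q r : ι → β} {K : Set ι} {a b : β} (hq : AntitoneOn q K) (hr : AntitoneOn r K)
    (ha : IsGLB (q '' K) a) (hb : IsGLB (r '' K) b) :
    IsGLB ((fun i => q i + r i) '' K) (a + b) := by
  refine ⟨?_, fun c hc => ?_⟩
  · rintro _ ⟨i, hi, rfl⟩
    exact add_le_add (ha.1 ⟨i, hi, rfl⟩) (hb.1 ⟨i, hi, rfl⟩)
  have hcr : ∀ j ∈ K, c - r j ≤ a := fun j hj => ha.2 <| by
    rintro _ ⟨i, hi, rfl⟩
    have hmax : max i j ∈ K := max_rec' K hi hj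
    have : c ≤ q i + r j := (hc ⟨max i j, hmax, rfl⟩).trans
      (add_le_add (hq hi hmax (le_max_left i j)) (hr hj hmax (le_max_right i j)))
    exact sub_le_iff_le_add.mpr this
  have : c - a ≤ b := hb.2 <| by
    rintro _ ⟨j, hj, rfl⟩
    exact sub_le_comm.mp (hcr j hj)
  exact sub_le_iff_le_add'.mp this

end Antitone

theorem StatPConv.of_le_add {X E : Type*} [AddCommGroup X] [AddCommGroup E] [Lattice E]
    [AddLeftMono E] {p : X → E} {x y z : ℕ → X} {a b c : X}
    (hx : StatPConv p x a) (hy : StatPConv p y b)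
    (hz : ∀ n, p (z n - c) ≤ p (x n - a) + p (y n - b)) : StatPConv p z c := by
  obtain ⟨qx, Kx, hdx, hmx, hgx, hbx⟩ := hx
  obtain ⟨qy, Ky, hdy, hmy, hgy, hby⟩ := hy
  have hd : HasDensity (Kx ∩ Ky) 1 := hdx.inter_of_one hdy
  have hcof : ∀ i, ∃ j ∈ Kx ∩ Ky, i ≤ j := fun i =>
    (hd.infinite_of_one.exists_gt i).imp fun _ h => ⟨h.1, h.2.le⟩
  replace hmx : AntitoneOn qx Kx := hmx
  replace hmy : AntitoneOn qy Ky := hmy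
  have hgx' := (hmx.isGLB_image_iff_of_cofinal Set.inter_subset_left fun i _ => hcof i).mpr hgx
  have hgy' := (hmy.isGLB_image_iff_of_cofinal Set.inter_subset_right fun i _ => hcof i).mpr hgy
  have hmx' : AntitoneOn qx (Kx ∩ Ky) := hmx.mono Set.inter_subset_left
  have hmy' : AntitoneOn qy (Kx ∩ Ky) := hmy.mono Set.inter_subset_right
  refine ⟨fun n => qx n + qy n, Kx ∩ Ky, hd, hmx'.add hmy', ?_, fun n hn => ?_⟩
  · simpa only [add_zero] using hmx'.isGLB_image_add hmy' hgx' hgy'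
  · exact (hz n).trans (add_le_add (hbx n hn.1) (hby n hn.2))

theorem statPConv_sup_inf_general {X E : Type*} [AddCommGroup X] [Lattice X] [CovariantClass X X (· + ·) (· ≤ ·)]
    [AddCommGroup E] [Lattice E] [CovariantClass E E (· + ·) (· ≤ ·)]
    (p : X → E)
    (hptri : ∀ v w : X, p (v + w) ≤ p v + p w)
    (hpmono : ∀ v w : X, |v| ≤ |w| → p v ≤ p w)
    (x y : ℕ → X) (a b : X)
    (hx : StatPConv p x a) (hy : StatPConv p y b) :
    StatPConv p (fun n => x n ⊔ y n) (a ⊔ b) ∧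
      StatPConv p (fun n => x n ⊓ y n) (a ⊓ b) :=
  ⟨hx.of_le_add hy fun _ =>
      le_add_of_abs_le_abs_add_abs hptri hpmono (abs_sup_sub_sup_le_abs_add_abs _ _ _ _),
    hx.of_le_add hy fun _ =>
      le_add_of_abs_le_abs_add_abs hptri hpmono (abs_inf_sub_inf_le_abs_add_abs _ _ _ _)⟩

/-- Lattice operations are statistically p-continuous in a lattice-normed Riesz space. -/
theorem statPConv_sup_inf {X E : Type*} [AddCommGroup X] [Lattice X] [CovariantClass X X (· + ·) (· ≤ ·)] [Module ℝ X]
    [AddCommGroup E] [Lattice E] [CovariantClass E E (· + ·) (· ≤ ·)] [Module ℝ E]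
    (p : X → E)
    (hp0 : ∀ v : X, 0 ≤ p v)
    (hpeq : ∀ v : X, p v = 0 ↔ v = 0)
    (hpsmul : ∀ (c : ℝ) (v : X), p (c • v) = |c| • p v)
    (hptri : ∀ v w : X, p (v + w) ≤ p v + p w)
    (hpmono : ∀ v w : X, |v| ≤ |w| → p v ≤ p w)
    (x y : ℕ → X) (a b : X)
    (hx : StatPConv p x a) (hy : StatPConv p y b) :
    StatPConv p (fun n => x n ⊔ y n) (a ⊔ b) ∧
      StatPConv p (fun n => x n ⊓ y n) (a ⊓ b) :=
  statPConv_sup_inf_general p hptri hpmono x y a b hx hy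
end

section
/- If a Banach lattice X (viewed as the lattice-normed space (X, ‖·‖, ℝ)) is a statistical p-KB-space, then X is a KB-space: every increasing norm-bounded sequence of positive elements is norm convergent. -/
open scoped Classical

/-! A statistically p-convergent sequence converges in norm along an index set of density one,
hence along a nontrivial filter finer than `atTop`. An increasing sequence in a normed lattice
that converges along such a filter lies below the limit `a`, and by solidity of the norm
`‖a - x n‖` decreases in `n`, so the whole sequence converges to `a`. -/

open Filter Topology

lemma hasDensity_univ : HasDensity Set.univ 1 := by
  refine tendsto_const_nhds.congr' ?_
  filter_upwards [eventually_ne_atTop 0] with n hn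
  simp [hn]

lemma hasDensity_zero_of_finite {K : Set ℕ} (hK : K.Finite) : HasDensity K 0 := by
  refine squeeze_zero (fun n => by positivity) (fun n => ?_)
    (tendsto_const_div_atTop_nhds_zero_nat (hK.toFinset.card : ℝ))
  gcongr
  intro k hk
  exact hK.mem_toFinset.mpr (Finset.mem_filter.mp hk).2

lemma HasDensity.infinite {K : Set ℕ} {d : ℝ} (h : HasDensity K d) (hd : d ≠ 0) :
    K.Infinite :=
  fun hK => hd (tendsto_nhds_unique h (hasDensity_zero_of_finite hK))

lemma HasDensity.neBot_atTop_inf_principal {K : Set ℕ} {d : ℝ} (h : HasDensity K d)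
    (hd : d ≠ 0) : (atTop ⊓ 𝓟 K).NeBot :=
  frequently_iff_neBot.mp (Nat.frequently_atTop_iff_infinite.mpr (h.infinite hd))

lemma StatPConv.tendsto_atTop_inf_principal {X : Type*} [SeminormedAddCommGroup X]
    {x : ℕ → X} {a : X} (h : StatPConv (fun v : X => ‖v‖) x a) :
    ∃ K : Set ℕ, HasDensity K 1 ∧ Tendsto x (atTop ⊓ 𝓟 K) (𝓝 a) := by
  obtain ⟨q, K, hK, hq_anti, hq_glb, hxq⟩ := h
  refine ⟨K, hK, Metric.tendsto_nhds.mpr fun ε hε => ?_⟩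
  obtain ⟨_, ⟨k, hk, rfl⟩, -, hqk⟩ := hq_glb.exists_between hε
  filter_upwards [inf_le_left (b := 𝓟 K) (eventually_ge_atTop k),
    inf_le_right (a := atTop) (mem_principal_self K)] with n hkn hn
  calc dist (x n) a = ‖x n - a‖ := dist_eq_norm _ _
    _ ≤ q n := hxq n hn
    _ ≤ q k := hq_anti k hk n hn hkn
    _ < ε := hqk

section NormedLattice

variable {X : Type*} [NormedAddCommGroup X] [Lattice X] [HasSolidNorm X] [IsOrderedAddMonoid X]

lemma norm_sub_le_norm_sub_of_le_of_le {a x y : X} (hxy : x ≤ y) (hya : y ≤ a) :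
    ‖a - y‖ ≤ ‖a - x‖ := by
  refine norm_le_norm_of_abs_le_abs ?_
  rw [abs_of_nonneg (sub_nonneg.mpr hya), abs_of_nonneg (sub_nonneg.mpr (hxy.trans hya))]
  exact sub_le_sub_left hxy a

lemma Monotone.tendsto_atTop_of_tendsto {ι : Type*} [Preorder ι] {x : ι → X} (hx : Monotone x)
    {F : Filter ι} [F.NeBot] (hF : F ≤ atTop) {a : X} (h : Tendsto x F (𝓝 a)) :
    Tendsto x atTop (𝓝 a) := by
  have hle : ∀ m, x m ≤ a := fun m =>
    _root_.ge_of_tendsto h ((eventually_ge_atTop m).filter_mono hF |>.mono fun _ hn => hx hn)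
  refine Metric.tendsto_nhds.mpr fun ε hε => ?_
  obtain ⟨k, hk⟩ := (Metric.tendsto_nhds.mp h ε hε).exists
  filter_upwards [eventually_ge_atTop k] with n hkn
  calc dist (x n) a = ‖a - x n‖ := dist_eq_norm' _ _
    _ ≤ ‖a - x k‖ := norm_sub_le_norm_sub_of_le_of_le (hx hkn) (hle n)
    _ = dist (x k) a := (dist_eq_norm' _ _).symm
    _ < ε := hk

end NormedLattice

theorem kb_of_stat_p_kb_general {X : Type*} [NormedAddCommGroup X] [Lattice X] [HasSolidNorm X]
    [IsOrderedAddMonoid X]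
    (hstatKB : ∀ x : ℕ → X, (∀ n, 0 ≤ x n) → Monotone x →
      (∃ (e : ℝ) (K : Set ℕ), 0 ≤ e ∧ HasDensity K 1 ∧ ∀ n ∈ K, ‖x n‖ ≤ e) →
      ∃ a : X, StatPConv (fun v : X => (‖v‖ : ℝ)) x a) :
    ∀ x : ℕ → X, (∀ n, 0 ≤ x n) → Monotone x → (∃ M : ℝ, ∀ n, ‖x n‖ ≤ M) →
      ∃ a : X, Filter.Tendsto x Filter.atTop (nhds a) := by
  intro x hpos hmono ⟨M, hM⟩
  obtain ⟨a, hconv⟩ := hstatKB x hpos hmono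
    ⟨max M 0, Set.univ, le_max_right _ _, hasDensity_univ,
      fun n _ => (hM n).trans (le_max_left _ _)⟩
  obtain ⟨K, hK, hlim⟩ := hconv.tendsto_atTop_inf_principal
  have := hK.neBot_atTop_inf_principal one_ne_zero
  exact ⟨a, hmono.tendsto_atTop_of_tendsto inf_le_left hlim⟩

/-- A Banach lattice, viewed as the lattice-normed space `(X, ‖·‖, ℝ)`, that is a
statistical p-KB-space is a KB-space: every increasing norm-bounded sequence of
positive elements is norm convergent. -/
theorem kb_of_stat_p_kb {X : Type*} [NormedAddCommGroup X] [Lattice X] [HasSolidNorm X]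
    [IsOrderedAddMonoid X] [NormedSpace ℝ X]
    [CompleteSpace X]
    (hstatKB : ∀ x : ℕ → X, (∀ n, 0 ≤ x n) → Monotone x →
      (∃ (e : ℝ) (K : Set ℕ), 0 ≤ e ∧ HasDensity K 1 ∧ ∀ n ∈ K, ‖x n‖ ≤ e) →
      ∃ a : X, StatPConv (fun v : X => (‖v‖ : ℝ)) x a) :
    ∀ x : ℕ → X, (∀ n, 0 ≤ x n) → Monotone x → (∃ M : ℝ, ∀ n, ‖x n‖ ≤ M) →
      ∃ a : X, Filter.Tendsto x Filter.atTop (nhds a) :=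
  kb_of_stat_p_kb_general hstatKB
end
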